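/- In the Weyl algebra over ℂ(b,c), with ℓ(c) = (∂ − (x∂ − c))·x∂, there exists q ∈ D such that (−x∂ + c + 1)·(x(1−x)∂ + c + 1) = (c+1)² + q·ℓ(c). Consequently B = (−x/(c+1))∂ + 1 is a down-step operator inverse (modulo Dℓ(c)) to the up-step operator H = (x(1−x)/(c+1))∂ + 1. -/

import Mathlib

/-! The identity holds in any algebra with elements `x, ∂` satisfying `∂x = x∂ + 1`, with
`q = −x`: for `θ = x∂` this relation gives `θx = x(θ + 1)`, and with it both sides expand to
`(c+1)² − θ² + xθ² − c xθ`. Scaling by `(c+1)⁻²` gives the statement about `B` and `H`. -/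

noncomputable def Xop : Module.End ℂ (Polynomial ℂ) := LinearMap.mulLeft ℂ Polynomial.X
noncomputable def Dop : Module.End ℂ (Polynomial ℂ) := Polynomial.derivative
/-- The Euler operator `θ = x∂`. -/
noncomputable def Th : Module.End ℂ (Polynomial ℂ) := Xop * Dop

/-- The operator `ℓ(c) = (∂ − (x∂ − c))·(x∂)`. -/
noncomputable def lop (c : ℂ) : Module.End ℂ (Polynomial ℂ) :=
  (Dop - (Th - c • 1)) * Th

section WeylRelation

variable {R : Type*} [Ring R] {a d : R}

theorem euler_mul_of_weyl (h : d * a = a * d + 1) : a * d * a = a * (a * d) + a := by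
  rw [mul_assoc, h, mul_add, mul_one]

theorem syzygy_of_weyl {K : Type*} [CommRing K] [Algebra K R] (h : d * a = a * d + 1) (c : K) :
    (-(a * d) + (c + 1) • 1) * (a * (1 - a) * d + (c + 1) • 1)
      = ((c + 1) ^ 2) • 1 + (-a) * ((d - (a * d - c • 1)) * (a * d)) := by
  have hθ : a * (1 - a) * d = a * d - a * (a * d) := by noncomm_ring
  rw [hθ]
  set θ := a * d
  have hθa : θ * (a * θ) = a * (θ * θ) + a * θ := by
    rw [← mul_assoc, euler_mul_of_weyl h, add_mul, mul_assoc]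
  have hθθ : a * (d * θ) = θ * θ := (mul_assoc a d θ).symm
  simp only [add_mul, mul_add, sub_mul, mul_sub, neg_mul, smul_mul_assoc,
    mul_smul_comm, one_mul, mul_one, hθa, hθθ]
  module

theorem syzygy_of_weyl_normalized {K : Type*} [Field K] [Algebra K R] (h : d * a = a * d + 1)
    {c : K} (hc : c + 1 ≠ 0) :
    ((-(c + 1)⁻¹) • (a * d) + 1) * ((c + 1)⁻¹ • (a * (1 - a) * d) + 1) - 1
      = ((c + 1)⁻¹ ^ 2 • (-a)) * ((d - (a * d - c • 1)) * (a * d)) := by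
  have hB : (-(c + 1)⁻¹) • (a * d) + 1 = (c + 1)⁻¹ • (-(a * d) + (c + 1) • (1 : R)) := by
    rw [smul_add, smul_smul, inv_mul_cancel₀ hc, one_smul, smul_neg, neg_smul]
  have hH : (c + 1)⁻¹ • (a * (1 - a) * d) + 1
      = (c + 1)⁻¹ • (a * (1 - a) * d + (c + 1) • (1 : R)) := by
    rw [smul_add, smul_smul, inv_mul_cancel₀ hc, one_smul]
  rw [hB, hH, smul_mul_smul_comm, ← sq, syzygy_of_weyl h, smul_add, smul_smul, ← mul_pow,
    inv_mul_cancel₀ hc, one_pow, one_smul, add_sub_cancel_left, smul_mul_assoc]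

end WeylRelation

theorem Dop_mul_Xop : Dop * Xop = Xop * Dop + 1 := by
  refine LinearMap.ext fun p => ?_
  simp [Dop, Xop, Polynomial.derivative_mul, add_comm]

/-- there is `q` in the Weyl algebra `D` with
`(−x∂ + c + 1)·(x(1−x)∂ + c + 1) = (c+1)² + q·ℓ(c)`; consequently
`B = (−x/(c+1))∂ + 1` is a down-step operator inverse modulo `D·ℓ(c)` to the
up-step operator `H = (x(1−x)/(c+1))∂ + 1`. -/
theorem downstep_syzygy_for_lop (c : ℂ) :
    (∃ q ∈ Algebra.adjoin ℂ {Xop, Dop},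
      (-Th + (c + 1) • 1) * (Xop * (1 - Xop) * Dop + (c + 1) • 1)
        = ((c + 1) ^ 2) • 1 + q * lop c) ∧
    (c + 1 ≠ 0 →
      ∃ t ∈ Algebra.adjoin ℂ {Xop, Dop},
        ((-(c + 1)⁻¹) • Th + 1) * ((c + 1)⁻¹ • (Xop * (1 - Xop) * Dop) + 1) - 1
          = t * lop c) := by
  have hX : Xop ∈ Algebra.adjoin ℂ {Xop, Dop} := Algebra.subset_adjoin (Set.mem_insert _ _)
  refine ⟨⟨-Xop, neg_mem hX, syzygy_of_weyl Dop_mul_Xop c⟩, fun hc => ?_⟩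
  exact ⟨(c + 1)⁻¹ ^ 2 • (-Xop), Subalgebra.smul_mem _ (neg_mem hX) _,
    syzygy_of_weyl_normalized Dop_mul_Xop hc⟩
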